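/- For any real ξ₁ with −1 ≤ ξ₁ ≤ 0, the pair β = ⟨[0,0],[−ξ₁,−ξ₁]⟩ is an IVIFN with S(β) = ξ₁, H(β) = −ξ₁, E2(β) = 0, and E3(β) = 0; moreover any IVIFN γ with S(γ) = ξ₁ satisfies β ≤_HZX γ. -/

import Mathlib

structure IVIFN where
  muL : ℝ
  muR : ℝ
  nuL : ℝ
  nuR : ℝ
  muL_nonneg : 0 ≤ muL
  mu_le : muL ≤ muR
  muR_le_one : muR ≤ 1
  nuL_nonneg : 0 ≤ nuL
  nu_le : nuL ≤ nuR
  nuR_le_one : nuR ≤ 1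
  sum_le_one : muR + nuR ≤ 1

noncomputable def Sf (a : IVIFN) : ℝ := (a.muL + a.muR) / 2 - (a.nuL + a.nuR) / 2
noncomputable def Hf (a : IVIFN) : ℝ := (a.muL + a.muR) / 2 + (a.nuL + a.nuR) / 2
noncomputable def E2 (a : IVIFN) : ℝ := (a.muR - a.muL + a.nuR - a.nuL) / 2
noncomputable def E3 (a : IVIFN) : ℝ := a.muR - a.muL

def ltHZX (a b : IVIFN) : Prop :=
  Sf a < Sf b ∨ (Sf a = Sf b ∧ (Hf a < Hf b ∨ (Hf a = Hf b ∧
    (E2 a < E2 b ∨ (E2 a = E2 b ∧ E3 a < E3 b)))))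

def leHZX (a b : IVIFN) : Prop := a = b ∨ ltHZX a b

/-! Since `Hf a = (μL + μR) - Sf a`, every IVIFN of score `ξ₁` has accuracy at least `-ξ₁`,
and `E2 ≥ 0` always. The point `⟨[0, 0], [-ξ₁, -ξ₁]⟩` attains both bounds, and an IVIFN with
`E2 = 0` is determined by its score and accuracy, so it lies below every other IVIFN of score `ξ₁`. -/

namespace IVIFN

def nonmember (t : ℝ) (ht₀ : 0 ≤ t) (ht₁ : t ≤ 1) : IVIFN :=
  ⟨0, 0, t, t, le_rfl, le_rfl, zero_le_one, ht₀, le_rfl, ht₁, by linarith⟩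

theorem ext {a b : IVIFN} (hmuL : a.muL = b.muL) (hmuR : a.muR = b.muR)
    (hnuL : a.nuL = b.nuL) (hnuR : a.nuR = b.nuR) : a = b := by
  cases a; cases b; simp_all

section nonmember

variable (t : ℝ) (ht₀ : 0 ≤ t) (ht₁ : t ≤ 1)

theorem Sf_nonmember : Sf (nonmember t ht₀ ht₁) = -t := by
  simp only [Sf, nonmember]; ring

theorem Hf_nonmember : Hf (nonmember t ht₀ ht₁) = t := by
  simp only [Hf, nonmember]; ring

theorem E2_nonmember : E2 (nonmember t ht₀ ht₁) = 0 := by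
  simp only [E2, nonmember]; ring

theorem E3_nonmember : E3 (nonmember t ht₀ ht₁) = 0 := by
  simp only [E3, nonmember]; ring

end nonmember

theorem neg_Sf_le_Hf (a : IVIFN) : -Sf a ≤ Hf a := by
  have := a.muL_nonneg; have := a.mu_le
  simp only [Sf, Hf]; linarith

theorem E2_nonneg (a : IVIFN) : 0 ≤ E2 a := by
  have := a.mu_le; have := a.nu_le
  simp only [E2]; linarith

-- `E2 a = 0` forces both intervals of `a` to be points, which `Sf` and `Hf` then locate.
theorem eq_of_E2_eq_zero {a b : IVIFN} (ha : E2 a = 0) (hb : E2 b = 0) (hS : Sf a = Sf b)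
    (hH : Hf a = Hf b) : a = b := by
  have := a.mu_le; have := a.nu_le; have := b.mu_le; have := b.nu_le
  simp only [E2, Sf, Hf] at ha hb hS hH
  exact ext (by linarith) (by linarith) (by linarith) (by linarith)

theorem leHZX_of_E2_eq_zero {a b : IVIFN} (ha : E2 a = 0) (hS : Sf a = Sf b)
    (hH : Hf a ≤ Hf b) : leHZX a b := by
  rcases hH.lt_or_eq with hH | hH
  · exact Or.inr (Or.inr ⟨hS, Or.inl hH⟩)
  rcases (E2_nonneg b).lt_or_eq with hE | hE
  · exact Or.inr (Or.inr ⟨hS, Or.inr ⟨hH, Or.inl (ha ▸ hE)⟩⟩)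
  · exact Or.inl (eq_of_E2_eq_zero ha hE.symm hS hH)

end IVIFN

open IVIFN in
theorem least_with_score (ξ₁ : ℝ) (h1 : -1 ≤ ξ₁) (h2 : ξ₁ ≤ 0) :
    ∃ β : IVIFN, β.muL = 0 ∧ β.muR = 0 ∧ β.nuL = -ξ₁ ∧ β.nuR = -ξ₁ ∧
      Sf β = ξ₁ ∧ Hf β = -ξ₁ ∧ E2 β = 0 ∧ E3 β = 0 ∧
      ∀ γ : IVIFN, Sf γ = ξ₁ → leHZX β γ := by
  set β := nonmember (-ξ₁) (neg_nonneg.mpr h2) (by linarith)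
  have hS : Sf β = ξ₁ := by rw [Sf_nonmember, neg_neg]
  refine ⟨β, rfl, rfl, rfl, rfl, hS, Hf_nonmember .., E2_nonmember .., E3_nonmember .., ?_⟩
  intro γ hγ
  refine leHZX_of_E2_eq_zero (E2_nonmember ..) (hS.trans hγ.symm) ?_
  calc Hf β = -Sf γ := by rw [Hf_nonmember, hγ]
    _ ≤ Hf γ := neg_Sf_le_Hf γ
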